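/- arXiv:2209.00837 — 3 statements merged into one kernel-verified Lean document; each statement's English description precedes it below -/
import Mathlib

section
/- Noncrossing matchings of {2,...,n} are in bijection with noncrossing set partitions of [n] in which every singleton block, if any, is the block {1}. Explicitly, the map sending a noncrossing set partition π of [n] to the matching consisting of {min B, max B} for each block B of π not containing 1 (and with |B| ≥ 2 forced for such blocks) is a bijection onto the set of noncrossing matchings of {2,...,n}. -/
/- We model `[n]` as `Fin (n+1)`, with the element `1 ∈ [n]` corresponding to `0 : Fin (n+1)`
and `{2,…,n}` corresponding to the nonzero elements. -/

def IsSetPartition (n : ℕ) (π : Finset (Finset (Fin (n + 1)))) : Prop :=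
  (∀ B ∈ π, B.Nonempty) ∧ ((π : Set (Finset (Fin (n + 1)))).Pairwise fun A B => Disjoint A B) ∧
    π.sup id = Finset.univ

def NoncrossingPartition (n : ℕ) (π : Finset (Finset (Fin (n + 1)))) : Prop :=
  ¬ ∃ A B, A ∈ π ∧ B ∈ π ∧ A ≠ B ∧ ∃ a b c d : Fin (n + 1),
      a ∈ A ∧ c ∈ A ∧ b ∈ B ∧ d ∈ B ∧ a < b ∧ b < c ∧ c < d

def IsMatching (n : ℕ) (m : Finset (Finset (Fin (n + 1)))) : Prop :=
  (∀ p ∈ m, p.card = 2) ∧ (m : Set (Finset (Fin (n + 1)))).Pairwise fun p q => Disjoint p q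

def NoncrossingMatching (n : ℕ) (m : Finset (Finset (Fin (n + 1)))) : Prop :=
  ¬ ∃ a b c d : Fin (n + 1), a < b ∧ b < c ∧ c < d ∧
      ({a, c} : Finset (Fin (n + 1))) ∈ m ∧ ({b, d} : Finset (Fin (n + 1))) ∈ m

/-- The map sending a partition to the matching `{min B, max B}` over blocks `B` not
containing `1` (i.e. not containing `0 : Fin (n+1)`). -/
noncomputable def toMatching (n : ℕ) (π : Finset (Finset (Fin (n + 1)))) :
    Finset (Finset (Fin (n + 1))) :=
  (π.filter fun B => (0 : Fin (n + 1)) ∉ B).image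
    fun B => ({WithTop.untopD 0 B.min, WithBot.unbotD 0 B.max} : Finset (Fin (n + 1)))

namespace PMB
variable {n : ℕ}

def lo (B : Finset (Fin (n+1))) : Fin (n+1) := WithTop.untopD 0 B.min
def hi (B : Finset (Fin (n+1))) : Fin (n+1) := WithBot.unbotD 0 B.max

lemma lo_eq (B : Finset (Fin (n+1))) (h : B.Nonempty) : lo B = B.min' h := by
  simp [lo, ← Finset.coe_min' h]
lemma hi_eq (B : Finset (Fin (n+1))) (h : B.Nonempty) : hi B = B.max' h := by
  simp [hi, ← Finset.coe_max' h]
lemma lo_mem (B : Finset (Fin (n+1))) (h : B.Nonempty) : lo B ∈ B := by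
  rw [lo_eq B h]; exact B.min'_mem h
lemma hi_mem (B : Finset (Fin (n+1))) (h : B.Nonempty) : hi B ∈ B := by
  rw [hi_eq B h]; exact B.max'_mem h
lemma lo_le {B : Finset (Fin (n+1))} {x : Fin (n+1)} (hx : x ∈ B) : lo B ≤ x := by
  rw [lo_eq B ⟨x, hx⟩]; exact B.min'_le x hx
lemma le_hi {B : Finset (Fin (n+1))} {x : Fin (n+1)} (hx : x ∈ B) : x ≤ hi B := by
  rw [hi_eq B ⟨x, hx⟩]; exact B.le_max' x hx

lemma eq_lo {B : Finset (Fin (n+1))} {a : Fin (n+1)} (ha : a ∈ B)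
    (h : ∀ x ∈ B, a ≤ x) : lo B = a :=
  le_antisymm (lo_le ha) (h _ (lo_mem B ⟨a, ha⟩))

lemma eq_hi {B : Finset (Fin (n+1))} {a : Fin (n+1)} (ha : a ∈ B)
    (h : ∀ x ∈ B, x ≤ a) : hi B = a :=
  le_antisymm (h _ (hi_mem B ⟨a, ha⟩)) (le_hi ha)

lemma lo_pair {a b : Fin (n+1)} (hab : a ≤ b) : lo ({a, b} : Finset (Fin (n+1))) = a := by
  refine eq_lo (by simp) ?_
  intro x hx; rcases Finset.mem_insert.1 hx with h | h
  · exact h.ge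
  · exact le_trans hab (Finset.mem_singleton.1 h).ge

lemma hi_pair {a b : Fin (n+1)} (hab : a ≤ b) : hi ({a, b} : Finset (Fin (n+1))) = b := by
  refine eq_hi (by simp) ?_
  intro x hx; rcases Finset.mem_insert.1 hx with h | h
  · exact h.le.trans hab
  · exact (Finset.mem_singleton.1 h).le

lemma lo_lt_hi {B : Finset (Fin (n+1))} (h : 1 < B.card) : lo B < hi B := by
  obtain ⟨a, ha, b, hb, hab⟩ := Finset.one_lt_card.1 h
  rcases lt_or_eq_of_le (le_trans (lo_le ha) (le_hi ha)) with h' | h'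
  · exact h'
  · have hle : hi B ≤ lo B := h'.ge
    exact absurd (le_antisymm ((le_hi ha).trans (hle.trans (lo_le hb)))
      ((le_hi hb).trans (hle.trans (lo_le ha)))) hab

lemma pair_eq {p : Finset (Fin (n+1))} (h : p.card = 2) :
    p = ({lo p, hi p} : Finset (Fin (n+1))) := by
  have hne : p.Nonempty := Finset.card_pos.1 (by omega)
  have hlt : lo p < hi p := lo_lt_hi (by omega)
  refine (Finset.eq_of_subset_of_card_le ?_ ?_).symm
  · intro x hx
    rcases Finset.mem_insert.1 hx with h' | h'
    · exact h' ▸ lo_mem p hne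
    · exact (Finset.mem_singleton.1 h') ▸ hi_mem p hne
  · rw [h, Finset.card_pair hlt.ne]


lemma mem_toMatching {n : ℕ} {π : Finset (Finset (Fin (n+1)))} {q : Finset (Fin (n+1))} :
    q ∈ toMatching n π ↔ ∃ B, (B ∈ π ∧ (0 : Fin (n+1)) ∉ B) ∧
      ({lo B, hi B} : Finset (Fin (n+1))) = q := by
  simp [toMatching, lo, hi, Finset.mem_image, Finset.mem_filter]

variable {n : ℕ}

lemma cross_elim {π : Finset (Finset (Fin (n+1)))} (hnc : NoncrossingPartition n π)
    {A B : Finset (Fin (n+1))} {a b c d : Fin (n+1)} (hA : A ∈ π) (hB : B ∈ π)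
    (hAB : A ≠ B) (ha : a ∈ A) (hc : c ∈ A) (hb : b ∈ B) (hd : d ∈ B)
    (h1 : a < b) (h2 : b < c) (h3 : c < d) : False :=
  hnc ⟨A, B, hA, hB, hAB, a, b, c, d, ha, hc, hb, hd, h1, h2, h3⟩

lemma disj {π : Finset (Finset (Fin (n+1)))} (hp : IsSetPartition n π)
    {A B : Finset (Fin (n+1))} (hA : A ∈ π) (hB : B ∈ π) (hAB : A ≠ B)
    {x : Fin (n+1)} (hx : x ∈ A) : x ∉ B :=
  Finset.disjoint_left.1 (hp.2.1 (Finset.mem_coe.2 hA) (Finset.mem_coe.2 hB) hAB) hx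

lemma exists_block {π : Finset (Finset (Fin (n+1)))} (hp : IsSetPartition n π)
    (x : Fin (n+1)) : ∃ B ∈ π, x ∈ B := by
  have : x ∈ π.sup id := hp.2.2 ▸ Finset.mem_univ x
  simpa using Finset.mem_sup.1 this

lemma two_le_card {π : Finset (Finset (Fin (n+1)))} (hp : IsSetPartition n π)
    (hs : ∀ B ∈ π, B.card = 1 → B = ({0} : Finset (Fin (n+1))))
    {B : Finset (Fin (n+1))} (hB : B ∈ π) (h0 : (0 : Fin (n+1)) ∉ B) : 1 < B.card := by
  have h1 : 1 ≤ B.card := Finset.card_pos.2 (hp.1 B hB)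
  rcases eq_or_lt_of_le h1 with h | h
  · exact absurd ((hs B hB h.symm) ▸ Finset.mem_singleton_self (0 : Fin (n+1))) h0
  · exact h

lemma zero_lt_lo {B : Finset (Fin (n+1))} (hne : B.Nonempty)
    (h0 : (0 : Fin (n+1)) ∉ B) : 0 < lo B :=
  lt_of_le_of_ne (Fin.zero_le _) fun h => h0 (h ▸ lo_mem B hne)

lemma mapsTo {π : Finset (Finset (Fin (n+1)))} (hp : IsSetPartition n π)
    (hnc : NoncrossingPartition n π)
    (hs : ∀ B ∈ π, B.card = 1 → B = ({0} : Finset (Fin (n+1)))) :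
    IsMatching n (toMatching n π) ∧ NoncrossingMatching n (toMatching n π) ∧
      ∀ p ∈ toMatching n π, (0 : Fin (n+1)) ∉ p := by
  refine ⟨⟨?_, ?_⟩, ?_, ?_⟩
  · rintro p hpm
    obtain ⟨B, ⟨hB, h0⟩, rfl⟩ := mem_toMatching.1 hpm
    exact Finset.card_pair (lo_lt_hi (two_le_card hp hs hB h0)).ne
  · rintro p hpm q hqm hpq
    obtain ⟨A, ⟨hA, hA0⟩, rfl⟩ := mem_toMatching.1 (Finset.mem_coe.1 hpm)
    obtain ⟨B, ⟨hB, hB0⟩, rfl⟩ := mem_toMatching.1 (Finset.mem_coe.1 hqm)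
    have hAB : A ≠ B := by rintro rfl; exact hpq rfl
    have hAne := hp.1 A hA
    have hBne := hp.1 B hB
    refine Disjoint.mono ?_ ?_ (hp.2.1 (Finset.mem_coe.2 hA) (Finset.mem_coe.2 hB) hAB)
    · intro x hx
      rcases Finset.mem_insert.1 hx with h | h
      · exact h ▸ lo_mem A hAne
      · exact (Finset.mem_singleton.1 h) ▸ hi_mem A hAne
    · intro x hx
      rcases Finset.mem_insert.1 hx with h | h
      · exact h ▸ lo_mem B hBne
      · exact (Finset.mem_singleton.1 h) ▸ hi_mem B hBne
  · rintro ⟨a, b, c, d, h1, h2, h3, hac, hbd⟩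
    obtain ⟨A, ⟨hA, hA0⟩, hACeq⟩ := mem_toMatching.1 hac
    obtain ⟨B, ⟨hB, hB0⟩, hBDeq⟩ := mem_toMatching.1 hbd
    have hAne := hp.1 A hA
    have hBne := hp.1 B hB
    have hsubA : ({a, c} : Finset (Fin (n+1))) ⊆ A := by
      rw [← hACeq]; intro x hx
      rcases Finset.mem_insert.1 hx with h | h
      · exact h ▸ lo_mem A hAne
      · exact (Finset.mem_singleton.1 h) ▸ hi_mem A hAne
    have hsubB : ({b, d} : Finset (Fin (n+1))) ⊆ B := by
      rw [← hBDeq]; intro x hx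
      rcases Finset.mem_insert.1 hx with h | h
      · exact h ▸ lo_mem B hBne
      · exact (Finset.mem_singleton.1 h) ▸ hi_mem B hBne
    have hAB : A ≠ B := by
      rintro rfl
      have : b ∈ ({a, c} : Finset (Fin (n+1))) := by
        rw [← hACeq, hBDeq]; simp
      rcases Finset.mem_insert.1 this with h | h
      · exact absurd (h ▸ h1) (lt_irrefl _)
      · exact absurd ((Finset.mem_singleton.1 h) ▸ h2) (lt_irrefl _)
    exact cross_elim hnc hA hB hAB (hsubA (by simp)) (hsubA (by simp))
      (hsubB (by simp)) (hsubB (by simp)) h1 h2 h3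
  · rintro p hpm h0
    obtain ⟨B, ⟨hB, hB0⟩, rfl⟩ := mem_toMatching.1 hpm
    have hBne := hp.1 B hB
    rcases Finset.mem_insert.1 h0 with h | h
    · exact hB0 (h ▸ lo_mem B hBne)
    · exact hB0 ((Finset.mem_singleton.1 h) ▸ hi_mem B hBne)

def blockOf (m : Finset (Finset (Fin (n+1)))) (p : Finset (Fin (n+1))) :
    Finset (Fin (n+1)) :=
  Finset.univ.filter fun x => (lo p ≤ x ∧ x ≤ hi p) ∧
    ∀ q ∈ m, (lo q ≤ x ∧ x ≤ hi q) → lo q ≤ lo p ∧ hi p ≤ hi q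

def zeroBlock (m : Finset (Finset (Fin (n+1)))) : Finset (Fin (n+1)) :=
  Finset.univ.filter fun x => ∀ q ∈ m, ¬ (lo q ≤ x ∧ x ≤ hi q)

def toPartition (m : Finset (Finset (Fin (n+1)))) : Finset (Finset (Fin (n+1))) :=
  insert (zeroBlock m) (m.image (blockOf m))

lemma mem_blockOf {m : Finset (Finset (Fin (n+1)))} {p : Finset (Fin (n+1))}
    {x : Fin (n+1)} : x ∈ blockOf m p ↔ (lo p ≤ x ∧ x ≤ hi p) ∧
      ∀ q ∈ m, (lo q ≤ x ∧ x ≤ hi q) → lo q ≤ lo p ∧ hi p ≤ hi q := by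
  simp [blockOf]

lemma mem_zeroBlock {m : Finset (Finset (Fin (n+1)))} {x : Fin (n+1)} :
    x ∈ zeroBlock m ↔ ∀ q ∈ m, ¬ (lo q ≤ x ∧ x ≤ hi q) := by
  simp [zeroBlock]

lemma span_nested {π : Finset (Finset (Fin (n+1)))} (hp : IsSetPartition n π)
    (hnc : NoncrossingPartition n π) {B C : Finset (Fin (n+1))} (hB : B ∈ π) (hC : C ∈ π)
    (hBC : B ≠ C) {x : Fin (n+1)} (hx : x ∈ B) (h1 : lo C ≤ x) (h2 : x ≤ hi C) :
    lo C ≤ lo B ∧ hi B ≤ hi C := by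
  have hCne := hp.1 C hC
  have hxC : x ∉ C := disj hp hB hC hBC hx
  have h1' : lo C < x := lt_of_le_of_ne h1 fun h => hxC (h ▸ lo_mem C hCne)
  have h2' : x < hi C := lt_of_le_of_ne h2 fun h => hxC (h ▸ hi_mem C hCne)
  constructor
  · by_contra h
    push_neg at h
    exact cross_elim hnc hB hC hBC (lo_mem B (hp.1 B hB)) hx (lo_mem C hCne)
      (hi_mem C hCne) h h1' h2'
  · by_contra h
    push_neg at h
    exact cross_elim hnc hC hB hBC.symm (lo_mem C hCne) (hi_mem C hCne) hx
      (hi_mem B (hp.1 B hB)) h1' h2' h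

lemma blockOf_toMatching {π : Finset (Finset (Fin (n+1)))} (hp : IsSetPartition n π)
    (hnc : NoncrossingPartition n π) {B : Finset (Fin (n+1))} (hB : B ∈ π)
    (h0 : (0 : Fin (n+1)) ∉ B) :
    blockOf (toMatching n π) ({lo B, hi B} : Finset (Fin (n+1))) = B := by
  have hBne := hp.1 B hB
  have hlh : lo B ≤ hi B := lo_le (hi_mem B hBne)
  have hlop : lo ({lo B, hi B} : Finset (Fin (n+1))) = lo B := lo_pair hlh
  have hhip : hi ({lo B, hi B} : Finset (Fin (n+1))) = hi B := hi_pair hlh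
  ext x
  rw [mem_blockOf, hlop, hhip]
  constructor
  · rintro ⟨⟨hx1, hx2⟩, hinner⟩
    obtain ⟨C, hC, hxC⟩ := exists_block hp x
    by_cases hCB : C = B
    · exact hCB ▸ hxC
    by_cases hC0 : (0 : Fin (n+1)) ∈ C
    · -- crossing with the block containing 0
      exfalso
      have hxB : x ∉ B := fun h => disj hp hC hB hCB hxC h
      have h1' : lo B < x := lt_of_le_of_ne hx1 fun h => hxB (h ▸ lo_mem B hBne)
      have h2' : x < hi B := lt_of_le_of_ne hx2 fun h => hxB (h ▸ hi_mem B hBne)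
      exact cross_elim hnc hC hB hCB hC0 hxC (lo_mem B hBne) (hi_mem B hBne)
        (zero_lt_lo hBne h0) h1' h2'
    · exfalso
      have hCne := hp.1 C hC
      have hq : ({lo C, hi C} : Finset (Fin (n+1))) ∈ toMatching n π :=
        mem_toMatching.2 ⟨C, ⟨hC, hC0⟩, rfl⟩
      have hlh' : lo C ≤ hi C := lo_le (hi_mem C hCne)
      have := hinner _ hq
      rw [lo_pair hlh', hi_pair hlh'] at this
      have h1 := this ⟨lo_le hxC, le_hi hxC⟩
      have h2 := span_nested hp hnc hC hB hCB hxC hx1 hx2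
      have : lo B = lo C := le_antisymm h2.1 h1.1
      exact disj hp hB hC (fun h => hCB h.symm) (lo_mem B hBne) (this ▸ lo_mem C hCne)
  · intro hx
    refine ⟨⟨lo_le hx, le_hi hx⟩, ?_⟩
    rintro q hq ⟨hq1, hq2⟩
    obtain ⟨C, ⟨hC, hC0⟩, rfl⟩ := mem_toMatching.1 hq
    have hCne := hp.1 C hC
    have hlh' : lo C ≤ hi C := lo_le (hi_mem C hCne)
    rw [lo_pair hlh', hi_pair hlh'] at *
    by_cases hBC : B = C
    · subst hBC; exact ⟨le_refl _, le_refl _⟩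
    · exact span_nested hp hnc hB hC hBC hx hq1 hq2

lemma zeroBlock_toMatching {π : Finset (Finset (Fin (n+1)))} (hp : IsSetPartition n π)
    (hnc : NoncrossingPartition n π) {Z : Finset (Fin (n+1))} (hZ : Z ∈ π)
    (h0 : (0 : Fin (n+1)) ∈ Z) : zeroBlock (toMatching n π) = Z := by
  ext x
  rw [mem_zeroBlock]
  constructor
  · intro hx
    obtain ⟨C, hC, hxC⟩ := exists_block hp x
    by_cases hC0 : (0 : Fin (n+1)) ∈ C
    · have : C = Z := by
        by_contra h
        exact disj hp hC hZ h hC0 h0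
      exact this ▸ hxC
    · exfalso
      have hCne := hp.1 C hC
      have hq : ({lo C, hi C} : Finset (Fin (n+1))) ∈ toMatching n π :=
        mem_toMatching.2 ⟨C, ⟨hC, hC0⟩, rfl⟩
      have hlh' : lo C ≤ hi C := lo_le (hi_mem C hCne)
      have := hx _ hq
      rw [lo_pair hlh', hi_pair hlh'] at this
      exact this ⟨lo_le hxC, le_hi hxC⟩
  · rintro hx q hq ⟨hq1, hq2⟩
    obtain ⟨C, ⟨hC, hC0⟩, rfl⟩ := mem_toMatching.1 hq
    have hCne := hp.1 C hC
    have hlh' : lo C ≤ hi C := lo_le (hi_mem C hCne)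
    rw [lo_pair hlh'] at hq1
    rw [hi_pair hlh'] at hq2
    have hCZ : C ≠ Z := fun h => hC0 (h ▸ h0)
    have hxC : x ∉ C := disj hp hZ hC (fun h => hCZ h.symm) hx
    have h1' : lo C < x := lt_of_le_of_ne hq1 fun h => hxC (h ▸ lo_mem C hCne)
    have h2' : x < hi C := lt_of_le_of_ne hq2 fun h => hxC (h ▸ hi_mem C hCne)
    exact cross_elim hnc hZ hC hCZ.symm h0 hx (lo_mem C hCne) (hi_mem C hCne)
      (zero_lt_lo hCne hC0) h1' h2'

lemma left_inv {π : Finset (Finset (Fin (n+1)))} (hp : IsSetPartition n π)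
    (hnc : NoncrossingPartition n π) :
    toPartition (toMatching n π) = π := by
  ext C
  simp only [toPartition, Finset.mem_insert, Finset.mem_image]
  constructor
  · rintro (rfl | ⟨p, hpm, rfl⟩)
    · obtain ⟨Z, hZ, h0⟩ := exists_block hp 0
      rw [zeroBlock_toMatching hp hnc hZ h0]; exact hZ
    · obtain ⟨B, ⟨hB, h0⟩, rfl⟩ := mem_toMatching.1 hpm
      rw [blockOf_toMatching hp hnc hB h0]; exact hB
  · intro hC
    by_cases h0 : (0 : Fin (n+1)) ∈ C
    · exact Or.inl (zeroBlock_toMatching hp hnc hC h0).symm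
    · exact Or.inr ⟨{lo C, hi C}, mem_toMatching.2 ⟨C, ⟨hC, h0⟩, rfl⟩,
        blockOf_toMatching hp hnc hC h0⟩

section Inverse

variable {m : Finset (Finset (Fin (n+1)))}

lemma ncm_elim (hnc : NoncrossingMatching n m) {a b c d : Fin (n+1)}
    (h1 : a < b) (h2 : b < c) (h3 : c < d)
    (hac : ({a, c} : Finset (Fin (n+1))) ∈ m)
    (hbd : ({b, d} : Finset (Fin (n+1))) ∈ m) : False :=
  hnc ⟨a, b, c, d, h1, h2, h3, hac, hbd⟩

lemma mdisj (hm : IsMatching n m) {p q : Finset (Fin (n+1))} (hp : p ∈ m) (hq : q ∈ m)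
    (hpq : p ≠ q) {x : Fin (n+1)} (hx : x ∈ p) : x ∉ q :=
  Finset.disjoint_left.1 (hm.2 (Finset.mem_coe.2 hp) (Finset.mem_coe.2 hq) hpq) hx

lemma pair_ne (hm : IsMatching n m) {p : Finset (Fin (n+1))} (hp : p ∈ m) :
    p.Nonempty ∧ lo p < hi p ∧ p = ({lo p, hi p} : Finset (Fin (n+1))) := by
  have h2 := hm.1 p hp
  exact ⟨Finset.card_pos.1 (by omega), lo_lt_hi (by omega), pair_eq h2⟩

lemma lam (hm : IsMatching n m) (hnc : NoncrossingMatching n m)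
    {p q : Finset (Fin (n+1))} (hp : p ∈ m) (hq : q ∈ m) (hpq : p ≠ q) {x : Fin (n+1)}
    (hx1 : lo p ≤ x) (hx2 : x ≤ hi p) (hy1 : lo q ≤ x) (hy2 : x ≤ hi q) :
    (lo p ≤ lo q ∧ hi q ≤ hi p) ∨ (lo q ≤ lo p ∧ hi p ≤ hi q) := by
  obtain ⟨hpne, hplt, hpeq⟩ := pair_ne hm hp
  obtain ⟨hqne, hqlt, hqeq⟩ := pair_ne hm hq
  have key : ∀ r s : Finset (Fin (n+1)), r ∈ m → s ∈ m → r ≠ s →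
      lo r ≤ x → x ≤ hi r → lo s ≤ x → x ≤ hi s → lo r < lo s → hi s ≤ hi r := by
    intro r s hr hs hrs hr1 hr2 hs1 hs2 hlt
    obtain ⟨hrne, hrlt, hreq⟩ := pair_ne hm hr
    obtain ⟨hsne, hslt, hseq⟩ := pair_ne hm hs
    by_contra hcon
    push_neg at hcon
    have h1 : lo s < hi r := by
      rcases lt_or_eq_of_le (hs1.trans hr2) with h | h
      · exact h
      · exact absurd (h ▸ lo_mem s hsne) (mdisj hm hr hs hrs (hi_mem r hrne))
    exact ncm_elim hnc hlt h1 hcon (hreq ▸ hr) (hseq ▸ hs)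
  rcases lt_trichotomy (lo p) (lo q) with h | h | h
  · exact Or.inl ⟨h.le, key p q hp hq hpq hx1 hx2 hy1 hy2 h⟩
  · exact absurd (h ▸ lo_mem p (pair_ne hm hp).1) (mdisj hm hq hp hpq.symm (lo_mem q (pair_ne hm hq).1))
  · exact Or.inr ⟨h.le, key q p hq hp hpq.symm hy1 hy2 hx1 hx2 h⟩

lemma endpoint_mem (hm : IsMatching n m) (hnc : NoncrossingMatching n m)
    {p : Finset (Fin (n+1))} (hp : p ∈ m) :
    lo p ∈ blockOf m p ∧ hi p ∈ blockOf m p := by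
  obtain ⟨hpne, hplt, hpeq⟩ := pair_ne hm hp
  constructor
  · rw [mem_blockOf]
    refine ⟨⟨le_refl _, hplt.le⟩, ?_⟩
    rintro q hq ⟨hq1, hq2⟩
    by_cases hpq : p = q
    · subst hpq; exact ⟨le_refl _, le_refl _⟩
    rcases lam hm hnc hp hq hpq (le_refl _) hplt.le hq1 hq2 with ⟨h1, h2⟩ | h
    · have heq : lo p = lo q := le_antisymm h1 hq1
      have : lo p ∈ q := by rw [heq]; exact lo_mem q (pair_ne hm hq).1
      exact (mdisj hm hp hq hpq (lo_mem p hpne) this).elim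
    · exact h
  · rw [mem_blockOf]
    refine ⟨⟨hplt.le, le_refl _⟩, ?_⟩
    rintro q hq ⟨hq1, hq2⟩
    by_cases hpq : p = q
    · subst hpq; exact ⟨le_refl _, le_refl _⟩
    rcases lam hm hnc hp hq hpq hplt.le (le_refl _) hq1 hq2 with ⟨h1, h2⟩ | h
    · have heq : hi p = hi q := le_antisymm hq2 h2
      have : hi p ∈ q := by rw [heq]; exact hi_mem q (pair_ne hm hq).1
      exact (mdisj hm hp hq hpq (hi_mem p hpne) this).elim
    · exact h

lemma lo_blockOf (hm : IsMatching n m) (hnc : NoncrossingMatching n m)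
    {p : Finset (Fin (n+1))} (hp : p ∈ m) : lo (blockOf m p) = lo p :=
  eq_lo (endpoint_mem hm hnc hp).1 fun x hx => (mem_blockOf.1 hx).1.1

lemma hi_blockOf (hm : IsMatching n m) (hnc : NoncrossingMatching n m)
    {p : Finset (Fin (n+1))} (hp : p ∈ m) : hi (blockOf m p) = hi p :=
  eq_hi (endpoint_mem hm hnc hp).2 fun x hx => (mem_blockOf.1 hx).1.2

lemma zero_mem_zeroBlock (hm : IsMatching n m)
    (h0 : ∀ p ∈ m, (0 : Fin (n+1)) ∉ p) : (0 : Fin (n+1)) ∈ zeroBlock m := by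
  rw [mem_zeroBlock]
  rintro q hq ⟨hq1, hq2⟩
  have : lo q = 0 := le_antisymm hq1 (Fin.zero_le _)
  exact h0 q hq (this ▸ lo_mem q (pair_ne hm hq).1)

lemma zero_not_mem_blockOf (hm : IsMatching n m)
    (h0 : ∀ p ∈ m, (0 : Fin (n+1)) ∉ p) {p : Finset (Fin (n+1))} (hp : p ∈ m) :
    (0 : Fin (n+1)) ∉ blockOf m p := by
  intro h
  have := (mem_blockOf.1 h).1.1
  have : lo p = 0 := le_antisymm this (Fin.zero_le _)
  exact h0 p hp (this ▸ lo_mem p (pair_ne hm hp).1)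

lemma blockOf_disj (hm : IsMatching n m) {p q : Finset (Fin (n+1))}
    (hp : p ∈ m) (hq : q ∈ m) (hpq : p ≠ q) {x : Fin (n+1)}
    (hx : x ∈ blockOf m p) : x ∉ blockOf m q := by
  intro hy
  obtain ⟨⟨hx1, hx2⟩, hxin⟩ := mem_blockOf.1 hx
  obtain ⟨⟨hy1, hy2⟩, hyin⟩ := mem_blockOf.1 hy
  have h1 := hxin q hq ⟨hy1, hy2⟩
  have h2 := hyin p hp ⟨hx1, hx2⟩
  have : lo p = lo q := le_antisymm h2.1 h1.1
  exact mdisj hm hp hq hpq (lo_mem p (pair_ne hm hp).1)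
    (this ▸ lo_mem q (pair_ne hm hq).1)

lemma cover (hm : IsMatching n m) (hnc : NoncrossingMatching n m) (x : Fin (n+1)) :
    x ∈ zeroBlock m ∨ ∃ p ∈ m, x ∈ blockOf m p := by
  by_cases h : ∀ q ∈ m, ¬ (lo q ≤ x ∧ x ≤ hi q)
  · exact Or.inl (mem_zeroBlock.2 h)
  push_neg at h
  set S := m.filter fun q => lo q ≤ x ∧ x ≤ hi q with hS
  have hSne : S.Nonempty := by
    obtain ⟨q, hq, hq'⟩ := h
    exact ⟨q, Finset.mem_filter.2 ⟨hq, hq'⟩⟩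
  obtain ⟨q₀, hq₀S, hmin⟩ := S.exists_min_image (fun q => (hi q).val - (lo q).val) hSne
  have hq₀m := (Finset.mem_filter.1 hq₀S).1
  have hq₀1 := (Finset.mem_filter.1 hq₀S).2.1
  have hq₀2 := (Finset.mem_filter.1 hq₀S).2.2
  refine Or.inr ⟨q₀, hq₀m, mem_blockOf.2 ⟨⟨hq₀1, hq₀2⟩, ?_⟩⟩
  rintro q hq ⟨h1, h2⟩
  by_cases hqq : q = q₀
  · subst hqq; exact ⟨le_refl _, le_refl _⟩
  rcases lam hm hnc hq hq₀m hqq h1 h2 hq₀1 hq₀2 with h' | ⟨ha, hb⟩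
  · exact h'
  · exfalso
    have hqS : q ∈ S := Finset.mem_filter.2 ⟨hq, h1, h2⟩
    have hmin' := hmin q hqS
    have e1 : (lo q₀).val ≤ (lo q).val := ha
    have e2 : (hi q).val ≤ (hi q₀).val := hb
    have e3 : (lo q).val ≤ (hi q).val := le_trans h1 h2
    have e4 : (lo q).val = (lo q₀).val := by omega
    have heq : lo q = lo q₀ := Fin.ext e4
    have : lo q ∈ q₀ := by rw [heq]; exact lo_mem q₀ (pair_ne hm hq₀m).1
    exact mdisj hm hq hq₀m hqq (lo_mem q (pair_ne hm hq).1) this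

lemma mem_toPartition {m : Finset (Finset (Fin (n+1)))} {B : Finset (Fin (n+1))} :
    B ∈ toPartition m ↔ B = zeroBlock m ∨ ∃ p ∈ m, blockOf m p = B := by
  simp [toPartition]

lemma toPartition_isPartition (hm : IsMatching n m) (hnc : NoncrossingMatching n m)
    (h0 : ∀ p ∈ m, (0 : Fin (n+1)) ∉ p) : IsSetPartition n (toPartition m) := by
  refine ⟨?_, ?_, ?_⟩
  · intro B hB
    rcases mem_toPartition.1 hB with rfl | ⟨p, hp, rfl⟩
    · exact ⟨0, zero_mem_zeroBlock hm h0⟩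
    · exact ⟨lo p, (endpoint_mem hm hnc hp).1⟩
  · intro A hA B hB hAB
    rw [Finset.disjoint_left]
    rcases mem_toPartition.1 (Finset.mem_coe.1 hA) with rfl | ⟨p, hp, rfl⟩ <;>
      rcases mem_toPartition.1 (Finset.mem_coe.1 hB) with rfl | ⟨q, hq, rfl⟩
    · exact absurd rfl hAB
    · intro x hx hx'
      exact (mem_zeroBlock.1 hx) q hq (mem_blockOf.1 hx').1
    · intro x hx hx'
      exact (mem_zeroBlock.1 hx') p hp (mem_blockOf.1 hx).1
    · have hpq : p ≠ q := fun h => hAB (by rw [h])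
      intro x hx hx'
      exact blockOf_disj hm hp hq hpq hx hx'
  · apply Finset.eq_univ_of_forall
    intro x
    rw [Finset.mem_sup]
    rcases cover hm hnc x with h | ⟨p, hp, h⟩
    · exact ⟨zeroBlock m, mem_toPartition.2 (Or.inl rfl), h⟩
    · exact ⟨blockOf m p, mem_toPartition.2 (Or.inr ⟨p, hp, rfl⟩), h⟩

lemma toPartition_singletons (hm : IsMatching n m) (hnc : NoncrossingMatching n m)
    (h0 : ∀ p ∈ m, (0 : Fin (n+1)) ∉ p) :
    ∀ B ∈ toPartition m, B.card = 1 → B = ({0} : Finset (Fin (n+1))) := by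
  intro B hB hcard
  rcases mem_toPartition.1 hB with rfl | ⟨p, hp, rfl⟩
  · obtain ⟨a, ha⟩ := Finset.card_eq_one.1 hcard
    have h0' := zero_mem_zeroBlock hm h0
    rw [ha] at h0' ⊢
    rw [Finset.mem_singleton.1 h0']
  · exfalso
    have h1 := (endpoint_mem hm hnc hp).1
    have h2 := (endpoint_mem hm hnc hp).2
    have hlt := (pair_ne hm hp).2.1
    have : 1 < (blockOf m p).card := Finset.one_lt_card.2 ⟨_, h1, _, h2, hlt.ne⟩
    omega

lemma toPartition_noncrossing (hm : IsMatching n m) (hnc : NoncrossingMatching n m) :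
    NoncrossingPartition n (toPartition m) := by
  rintro ⟨A, B, hA, hB, hAB, a, b, c, d, ha, hc, hb, hd, h1, h2, h3⟩
  rcases mem_toPartition.1 hA with rfl | ⟨p, hp, rfl⟩ <;>
    rcases mem_toPartition.1 hB with rfl | ⟨q, hq, rfl⟩
  · exact hAB rfl
  · -- A = zeroBlock, B = blockOf q : c is inside span q
    obtain ⟨⟨hb1, hb2⟩, -⟩ := mem_blockOf.1 hb
    obtain ⟨⟨hd1, hd2⟩, -⟩ := mem_blockOf.1 hd
    exact (mem_zeroBlock.1 hc) q hq ⟨hb1.trans h2.le, h3.le.trans hd2⟩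
  · -- A = blockOf p, B = zeroBlock : b is inside span p
    obtain ⟨⟨ha1, ha2⟩, -⟩ := mem_blockOf.1 ha
    obtain ⟨⟨hc1, hc2⟩, -⟩ := mem_blockOf.1 hc
    exact (mem_zeroBlock.1 hb) p hp ⟨ha1.trans h1.le, h2.le.trans hc2⟩
  · have hpq : p ≠ q := fun h => hAB (by rw [h])
    obtain ⟨⟨ha1, ha2⟩, -⟩ := mem_blockOf.1 ha
    obtain ⟨⟨hc1, hc2⟩, hcin⟩ := mem_blockOf.1 hc
    obtain ⟨⟨hb1, hb2⟩, hbin⟩ := mem_blockOf.1 hb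
    obtain ⟨⟨hd1, hd2⟩, -⟩ := mem_blockOf.1 hd
    have e1 := hbin p hp ⟨ha1.trans h1.le, h2.le.trans hc2⟩
    have e2 := hcin q hq ⟨hb1.trans h2.le, h3.le.trans hd2⟩
    have heq : lo p = lo q := le_antisymm e1.1 e2.1
    have : lo p ∈ q := by rw [heq]; exact lo_mem q (pair_ne hm hq).1
    exact mdisj hm hp hq hpq (lo_mem p (pair_ne hm hp).1) this

lemma right_inv (hm : IsMatching n m) (hnc : NoncrossingMatching n m)
    (h0 : ∀ p ∈ m, (0 : Fin (n+1)) ∉ p) : toMatching n (toPartition m) = m := by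
  ext q
  rw [mem_toMatching]
  constructor
  · rintro ⟨B, ⟨hB, hB0⟩, rfl⟩
    rcases mem_toPartition.1 hB with rfl | ⟨p, hp, rfl⟩
    · exact absurd (zero_mem_zeroBlock hm h0) hB0
    · rw [lo_blockOf hm hnc hp, hi_blockOf hm hnc hp, ← pair_eq (hm.1 p hp)]
      exact hp
  · intro hq
    refine ⟨blockOf m q, ⟨mem_toPartition.2 (Or.inr ⟨q, hq, rfl⟩),
      zero_not_mem_blockOf hm h0 hq⟩, ?_⟩
    rw [lo_blockOf hm hnc hq, hi_blockOf hm hnc hq, ← pair_eq (hm.1 q hq)]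

end Inverse

end PMB
/-- Noncrossing set partitions of `[n]` whose only possible singleton block is `{1}` are in
bijection with noncrossing matchings of `{2,…,n}`, via taking `{min B, max B}` of each block
not containing `1`. -/
theorem partition_matching_bijection (n : ℕ) :
    Set.BijOn (toMatching n)
      {π | IsSetPartition n π ∧ NoncrossingPartition n π ∧
        ∀ B ∈ π, B.card = 1 → B = ({0} : Finset (Fin (n + 1)))}
      {m | IsMatching n m ∧ NoncrossingMatching n m ∧
        ∀ p ∈ m, (0 : Fin (n + 1)) ∉ p} := by
  refine ⟨?_, ?_, ?_⟩
  · intro π hπ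
    exact PMB.mapsTo hπ.1 hπ.2.1 hπ.2.2
  · intro π₁ h1 π₂ h2 heq
    calc π₁ = PMB.toPartition (toMatching n π₁) := (PMB.left_inv h1.1 h1.2.1).symm
    _ = PMB.toPartition (toMatching n π₂) := by rw [heq]
    _ = π₂ := PMB.left_inv h2.1 h2.2.1
  · intro m hm
    exact ⟨PMB.toPartition m,
      ⟨PMB.toPartition_isPartition hm.1 hm.2.1 hm.2.2,
        PMB.toPartition_noncrossing hm.1 hm.2.1,
        PMB.toPartition_singletons hm.1 hm.2.1 hm.2.2⟩,
      PMB.right_inv hm.1 hm.2.1 hm.2.2⟩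
end

section
/- In the commutative ring M_n presented by generators x_{a,b} for two-element subsets {a,b} of [n], subject to the relations x_{a,b}·x_{a,b} = 0, x_{a,b}·x_{a,c} = 0 (for distinct a,b,c), and x_{a,b}·x_{c,d} + x_{a,c}·x_{b,d} + x_{a,d}·x_{b,c} = 0 (for distinct a,b,c,d), the element h(A) := Σ_{{a,b} ⊆ A} x_{a,b} satisfies h(A)² = 0 for every subset A ⊆ [n]. -/
open MvPolynomial

/-- The defining relations of the ring `M_n`: diagonal generators vanish, `x_{a,b}² = 0`,
`x_{a,b}·x_{a,c} = 0` for distinct `a,b,c`, and the Ptolemy relations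
`x_{a,b}x_{c,d} + x_{a,c}x_{b,d} + x_{a,d}x_{b,c} = 0` for distinct `a,b,c,d`. -/
def relSet (n : ℕ) : Set (MvPolynomial (Sym2 (Fin n)) ℚ) :=
  {p | (∃ a : Fin n, p = X s(a, a)) ∨
       (∃ a b : Fin n, a ≠ b ∧ p = X s(a, b) * X s(a, b)) ∨
       (∃ a b c : Fin n, a ≠ b ∧ a ≠ c ∧ b ≠ c ∧ p = X s(a, b) * X s(a, c)) ∨
       (∃ a b c d : Fin n, a ≠ b ∧ a ≠ c ∧ a ≠ d ∧ b ≠ c ∧ b ≠ d ∧ c ≠ d ∧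
         p = X s(a, b) * X s(c, d) + X s(a, c) * X s(b, d) + X s(a, d) * X s(b, c))}

/-- The ring `M_n`, presented by generators `x_{a,b}` for two-element subsets `{a,b}` of `[n]`
subject to the relations in `relSet`. -/
abbrev Mring (n : ℕ) := MvPolynomial (Sym2 (Fin n)) ℚ ⧸ Ideal.span (relSet n)

/-- The generator `x_{a,b}` of `M_n`. -/
noncomputable def xg {n : ℕ} (a b : Fin n) : Mring n :=
  Ideal.Quotient.mk _ (X s(a, b))

/-- `h(A) = Σ_{{a,b} ⊆ A} x_{a,b}`, the sum over two-element subsets of `A`. -/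
noncomputable def hA {n : ℕ} (A : Finset (Fin n)) : Mring n :=
  ∑ a ∈ A, ∑ b ∈ A.filter (fun b => a < b), xg a b

lemma mk_rel {n : ℕ} {p : MvPolynomial (Sym2 (Fin n)) ℚ} (h : p ∈ relSet n) :
    (Ideal.Quotient.mk (Ideal.span (relSet n)) p) = 0 :=
  Ideal.Quotient.eq_zero_iff_mem.mpr (Ideal.subset_span h)

lemma xg_symm {n : ℕ} (a b : Fin n) : xg a b = xg b a := by
  unfold xg; rw [Sym2.eq_swap]

lemma xg_diag {n : ℕ} (a : Fin n) : xg a a = 0 := mk_rel (Or.inl ⟨a, rfl⟩)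

lemma xg_adj {n : ℕ} (a b c : Fin n) : xg a b * xg a c = 0 := by
  by_cases hab : a = b
  · subst hab; rw [xg_diag, zero_mul]
  by_cases hac : a = c
  · subst hac; rw [xg_diag, mul_zero]
  by_cases hbc : b = c
  · subst hbc
    have := mk_rel (n := n) (Or.inr (Or.inl ⟨a, b, hab, rfl⟩))
    simpa [xg, map_mul] using this
  · have := mk_rel (n := n) (Or.inr (Or.inr (Or.inl ⟨a, b, c, hab, hac, hbc, rfl⟩)))
    simpa [xg, map_mul] using this

lemma xg_ptolemy {n : ℕ} {a b c d : Fin n} (hab : a ≠ b) (hac : a ≠ c) (had : a ≠ d)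
    (hbc : b ≠ c) (hbd : b ≠ d) (hcd : c ≠ d) :
    xg a b * xg c d + xg a c * xg b d + xg a d * xg b c = 0 := by
  have := mk_rel (n := n)
    (Or.inr (Or.inr (Or.inr ⟨a, b, c, d, hab, hac, had, hbc, hbd, hcd, rfl⟩)))
  rw [RingHom.map_add, RingHom.map_add, RingHom.map_mul, RingHom.map_mul, RingHom.map_mul] at this
  simpa [xg] using this


noncomputable def Ssum {n : ℕ} (A : Finset (Fin n)) (v : Fin n) : Mring n :=
  ∑ a ∈ A, xg a v

noncomputable def Hsum {n : ℕ} (A : Finset (Fin n)) : Mring n :=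
  ∑ a ∈ A, ∑ b ∈ A, xg a b

lemma E_zero {n : ℕ} {a b c v : Fin n} (ha : v ≠ a) (hb : v ≠ b) (hc : v ≠ c) :
    xg a b * xg c v + (xg b c * xg a v + xg c a * xg b v) = 0 := by
  by_cases hab : a = b
  · subst hab
    rw [xg_diag, zero_mul, xg_symm c a]
    simp [xg_adj]
  by_cases hac : a = c
  · subst hac
    rw [xg_diag, zero_mul, xg_symm b a]
    simp [xg_adj]
  by_cases hbc : b = c
  · subst hbc
    rw [xg_diag, zero_mul, xg_symm a b]
    simp [xg_adj]
  · have h := xg_ptolemy hab hac (Ne.symm ha) hbc (Ne.symm hb) (Ne.symm hc)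
    rw [xg_symm c a]
    linear_combination h

lemma sum3_cyc {n : ℕ} (A : Finset (Fin n)) (g : Fin n → Fin n → Fin n → Mring n) :
    ∑ a ∈ A, ∑ b ∈ A, ∑ c ∈ A, g b c a = ∑ a ∈ A, ∑ b ∈ A, ∑ c ∈ A, g a b c := by
  rw [Finset.sum_comm]
  exact Finset.sum_congr rfl fun b _ => Finset.sum_comm

set_option maxHeartbeats 1000000 in
lemma T_zero {n : ℕ} {A : Finset (Fin n)} {v : Fin n} (hv : v ∉ A) :
    ∑ a ∈ A, ∑ b ∈ A, ∑ c ∈ A, xg a b * xg c v = 0 := by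
  have e1 : (∑ a ∈ A, ∑ b ∈ A, ∑ c ∈ A, xg b c * xg a v)
      = ∑ a ∈ A, ∑ b ∈ A, ∑ c ∈ A, xg a b * xg c v :=
    sum3_cyc A (fun a b c => xg a b * xg c v)
  have e2 : (∑ a ∈ A, ∑ b ∈ A, ∑ c ∈ A, xg a b * xg c v)
      = ∑ a ∈ A, ∑ b ∈ A, ∑ c ∈ A, xg c a * xg b v :=
    sum3_cyc A (fun a b c => xg c a * xg b v)
  have key : (∑ a ∈ A, ∑ b ∈ A, ∑ c ∈ A, xg a b * xg c v)
      + ((∑ a ∈ A, ∑ b ∈ A, ∑ c ∈ A, xg b c * xg a v)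
      + (∑ a ∈ A, ∑ b ∈ A, ∑ c ∈ A, xg c a * xg b v)) = 0 := by
    simp only [← Finset.sum_add_distrib]
    refine Finset.sum_eq_zero fun a ha => Finset.sum_eq_zero fun b hb =>
      Finset.sum_eq_zero fun c hc => ?_
    exact E_zero (ne_of_mem_of_not_mem ha hv).symm (ne_of_mem_of_not_mem hb hv).symm
      (ne_of_mem_of_not_mem hc hv).symm
  rw [e1, ← e2] at key
  set T := ∑ a ∈ A, ∑ b ∈ A, ∑ c ∈ A, xg a b * xg c v with hT
  have h3 : (3 : ℚ) • T = 0 := by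
    rw [show (3 : ℚ) = 1 + (1 + 1) by norm_num, add_smul, add_smul, one_smul]
    exact key
  have : T = (3 : ℚ)⁻¹ • ((3 : ℚ) • T) := by rw [smul_smul]; norm_num
  rw [this, h3, smul_zero]

set_option maxHeartbeats 1000000 in
lemma Hsum_mul_Ssum {n : ℕ} {A : Finset (Fin n)} {v : Fin n} (hv : v ∉ A) :
    Hsum A * Ssum A v = 0 := by
  unfold Hsum Ssum
  simp only [Finset.sum_mul, Finset.mul_sum]
  have cyc1 : (∑ a ∈ A, ∑ b ∈ A, ∑ c ∈ A, xg b c * xg a v)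
      = ∑ a ∈ A, ∑ b ∈ A, ∑ c ∈ A, xg a b * xg c v :=
    sum3_cyc A (fun a b c => xg a b * xg c v)
  exact cyc1.trans (T_zero hv)

lemma Ssum_sq {n : ℕ} (A : Finset (Fin n)) (v : Fin n) :
    Ssum A v * Ssum A v = 0 := by
  unfold Ssum
  rw [Finset.sum_mul_sum]
  refine Finset.sum_eq_zero fun a _ => Finset.sum_eq_zero fun b _ => ?_
  rw [xg_symm a v, xg_symm b v, xg_adj]

lemma Hsum_insert {n : ℕ} {A : Finset (Fin n)} {v : Fin n} (hv : v ∉ A) :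
    Hsum (insert v A) = Hsum A + (Ssum A v + Ssum A v) := by
  unfold Hsum Ssum
  rw [Finset.sum_insert hv]
  simp only [Finset.sum_insert hv]
  rw [xg_diag, zero_add, Finset.sum_add_distrib]
  have : (∑ b ∈ A, xg v b) = ∑ b ∈ A, xg b v :=
    Finset.sum_congr rfl fun b _ => xg_symm v b
  rw [this]
  ring

set_option maxHeartbeats 1000000 in
lemma Hsum_sq {n : ℕ} (A : Finset (Fin n)) : Hsum A ^ 2 = 0 := by
  induction A using Finset.induction_on with
  | empty => simp [Hsum]
  | @insert v s hv ih =>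
    rw [Hsum_insert hv]
    have h1 : Hsum s * Ssum s v = 0 := Hsum_mul_Ssum hv
    have h2 : Ssum s v * Ssum s v = 0 := Ssum_sq s v
    linear_combination ih + 4 * h1 + 4 * h2

set_option maxHeartbeats 1000000 in
lemma Hsum_eq {n : ℕ} (A : Finset (Fin n)) : Hsum A = hA A + hA A := by
  unfold Hsum hA
  have pt : ∀ a b : Fin n, xg a b =
      (if a < b then xg a b else 0) + ((if b < a then xg a b else 0)
        + (if a = b then xg a b else 0)) := by
    intro a b
    rcases lt_trichotomy a b with h | h | h
    · simp [h, h.ne, h.asymm]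
    · subst h; simp [lt_irrefl, xg_diag]
    · simp [h, h.ne', h.asymm]
  calc (∑ a ∈ A, ∑ b ∈ A, xg a b)
      = ∑ a ∈ A, ∑ b ∈ A, ((if a < b then xg a b else 0)
        + ((if b < a then xg a b else 0) + (if a = b then xg a b else 0))) :=
        Finset.sum_congr rfl fun a _ => Finset.sum_congr rfl fun b _ => pt a b
    _ = (∑ a ∈ A, ∑ b ∈ A, if a < b then xg a b else 0)
        + ((∑ a ∈ A, ∑ b ∈ A, if b < a then xg a b else 0)
        + (∑ a ∈ A, ∑ b ∈ A, if a = b then xg a b else 0)) := by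
        simp [Finset.sum_add_distrib]
    _ = (∑ a ∈ A, ∑ b ∈ A.filter (fun b => a < b), xg a b)
        + (∑ a ∈ A, ∑ b ∈ A.filter (fun b => a < b), xg a b) := by
        have t3 : (∑ a ∈ A, ∑ b ∈ A, if a = b then xg a b else 0) = 0 := by
          refine Finset.sum_eq_zero fun a _ => Finset.sum_eq_zero fun b _ => ?_
          split
          · next h => subst h; exact xg_diag a
          · rfl
        have t2 : (∑ a ∈ A, ∑ b ∈ A, if b < a then xg a b else 0)
            = ∑ a ∈ A, ∑ b ∈ A, if a < b then xg a b else 0 := by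
          rw [Finset.sum_comm]
          refine Finset.sum_congr rfl fun a _ => Finset.sum_congr rfl fun b _ => ?_
          split
          · exact xg_symm b a
          · rfl
        rw [t3, t2, add_zero]
        simp [Finset.sum_filter]


/-- In `M_n`, `h(A)² = 0` for every subset `A ⊆ [n]`. -/
theorem hA_sq_eq_zero (n : ℕ) (A : Finset (Fin n)) : hA A ^ 2 = 0 := by
  have h2 : (2 : ℚ) • hA A = Hsum A := by rw [two_smul, Hsum_eq]
  have h4 : (4 : ℚ) • (hA A ^ 2) = Hsum A ^ 2 := by
    rw [← h2, smul_pow]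
    norm_num
  rw [Hsum_sq] at h4
  have : hA A ^ 2 = (4 : ℚ)⁻¹ • ((4 : ℚ) • hA A ^ 2) := by rw [smul_smul]; norm_num
  rw [this, h4, smul_zero]
end

section
/- In the ring M_n, for any fixed a ∈ [n], h([n]) · (Σ_{b ∈ [n], b ≠ a} x_{a,b}) = 0. -/
open MvPolynomial

lemma xg_mul_shared {n : ℕ} (p q r : Fin n) : xg p q * xg p r = 0 := by
  by_cases hpq : p = q
  · subst hpq; rw [xg_diag, zero_mul]
  by_cases hpr : p = r
  · subst hpr; rw [xg_diag, mul_zero]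
  by_cases hqr : q = r
  · subst hqr
    unfold xg; rw [← map_mul]
    exact Ideal.Quotient.eq_zero_iff_mem.mpr (Ideal.subset_span
      (Or.inr (Or.inl ⟨p, q, hpq, rfl⟩)))
  · unfold xg; rw [← map_mul]
    exact Ideal.Quotient.eq_zero_iff_mem.mpr (Ideal.subset_span
      (Or.inr (Or.inr (Or.inl ⟨p, q, r, hpq, hpr, hqr, rfl⟩))))

lemma ptolemy {n : ℕ} (a b c d : Fin n) :
    xg a b * xg c d + xg a c * xg d b + xg a d * xg b c = 0 := by
  by_cases H : a ≠ b ∧ a ≠ c ∧ a ≠ d ∧ b ≠ c ∧ b ≠ d ∧ c ≠ d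
  · obtain ⟨h1, h2, h3, h4, h5, h6⟩ := H
    rw [xg_symm d b]
    unfold xg
    rw [← map_mul, ← map_mul, ← map_mul, ← map_add, ← map_add]
    exact Ideal.Quotient.eq_zero_iff_mem.mpr (Ideal.subset_span
      (Or.inr (Or.inr (Or.inr ⟨a, b, c, d, h1, h2, h3, h4, h5, h6, rfl⟩))))
  · simp only [not_and_or, not_ne_iff] at H
    rcases H with h | h | h | h | h | h
    · subst h
      simp [xg_diag, xg_symm d a, xg_mul_shared]
    · subst h
      simp [xg_diag, xg_symm b a, xg_mul_shared]
    · subst h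
      simp [xg_diag, xg_symm c a, xg_symm b a, xg_mul_shared]
    · subst h
      simp [xg_diag, xg_symm a b, xg_symm d b, xg_mul_shared]
    · subst h
      simp [xg_diag, xg_symm a b, xg_symm c b, xg_mul_shared]
    · subst h
      simp [xg_diag, xg_symm a c, xg_symm b c, xg_mul_shared]
lemma half_zero {n : ℕ} (x : Mring n) (h : x + x = 0) : x = 0 := by
  have h2 : (2:ℚ) • x = 0 := by rw [two_smul]; exact h
  have h3 := congrArg (fun y => (2:ℚ)⁻¹ • y) h2
  simpa [smul_smul] using h3

lemma third_zero {n : ℕ} (x : Mring n) (h : x + x + x = 0) : x = 0 := by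
  have h2 : (3:ℚ) • x = 0 := by
    rw [show (3:ℚ) = 1 + 1 + 1 by norm_num, add_smul, add_smul, one_smul]; exact h
  have h3 := congrArg (fun y => (3:ℚ)⁻¹ • y) h2
  simpa [smul_smul] using h3

lemma key_double {n : ℕ} :
    (∑ c : Fin n, ∑ d : Fin n, xg c d) = hA Finset.univ + hA Finset.univ := by
  have tri : ∀ c d : Fin n, xg c d =
      (if c < d then xg c d else 0) + (if d < c then xg c d else 0) := by
    intro c d
    rcases lt_trichotomy c d with h | h | h
    · simp [h, lt_asymm h]
    · subst h; simp [xg_diag]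
    · simp [h, lt_asymm h]
  have hhA : hA (Finset.univ : Finset (Fin n)) =
      ∑ c : Fin n, ∑ d : Fin n, if c < d then xg c d else 0 := by
    unfold hA
    refine Finset.sum_congr rfl fun c _ => ?_
    rw [Finset.sum_filter]
  calc (∑ c : Fin n, ∑ d : Fin n, xg c d)
      = ∑ c : Fin n, ∑ d : Fin n,
          ((if c < d then xg c d else 0) + (if d < c then xg c d else 0)) := by
        exact Finset.sum_congr rfl fun c _ => Finset.sum_congr rfl fun d _ => tri c d
    _ = (∑ c : Fin n, ∑ d : Fin n, if c < d then xg c d else 0)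
        + ∑ c : Fin n, ∑ d : Fin n, if d < c then xg c d else 0 := by
        simp [Finset.sum_add_distrib]
    _ = hA Finset.univ + hA Finset.univ := by
        rw [← hhA]
        congr 1
        rw [Finset.sum_comm]
        rw [hhA]
        refine Finset.sum_congr rfl fun c _ => Finset.sum_congr rfl fun d _ => ?_
        by_cases h : c < d
        · simp [h, xg_symm c d]
        · simp [h]

/-- In `M_n`, for any `a ∈ [n]`, `h([n]) · (Σ_{b ≠ a} x_{a,b}) = 0`. -/
theorem hUniv_mul_star_eq_zero (n : ℕ) (a : Fin n) :
    hA (Finset.univ : Finset (Fin n)) * (∑ b ∈ Finset.univ.erase a, xg a b) = 0 := by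
  have hstar : (∑ b ∈ Finset.univ.erase a, xg a b) = ∑ b : Fin n, xg a b :=
    Finset.sum_erase _ (xg_diag a)
  set S : Mring n := ∑ b : Fin n, ∑ c : Fin n, ∑ d : Fin n, xg a b * xg c d with hSdef
  have cyc1 : (∑ b : Fin n, ∑ c : Fin n, ∑ d : Fin n, xg a c * xg d b) = S := by
    rw [Finset.sum_comm]
    exact Finset.sum_congr rfl fun c _ => Finset.sum_comm
  have cyc2 : (∑ b : Fin n, ∑ c : Fin n, ∑ d : Fin n, xg a d * xg b c) = S := by
    rw [show (∑ b : Fin n, ∑ c : Fin n, ∑ d : Fin n, xg a d * xg b c)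
        = ∑ b : Fin n, ∑ d : Fin n, ∑ c : Fin n, xg a d * xg b c from
      Finset.sum_congr rfl fun b _ => Finset.sum_comm]
    rw [Finset.sum_comm]
  have hS3 : S + S + S = 0 := by
    have hsplit : (∑ b : Fin n, ∑ c : Fin n, ∑ d : Fin n,
        (xg a b * xg c d + xg a c * xg d b + xg a d * xg b c)) = S + S + S := by
      simp only [Finset.sum_add_distrib]
      rw [cyc1, cyc2, ← hSdef]
    rw [← hsplit]
    exact Finset.sum_eq_zero fun b _ => Finset.sum_eq_zero fun c _ =>
      Finset.sum_eq_zero fun d _ => ptolemy a b c d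
  have hS : S = 0 := third_zero S hS3
  have hfact : S = (∑ b : Fin n, xg a b) * (hA Finset.univ + hA Finset.univ) := by
    rw [← key_double, hSdef, Finset.sum_mul]
    refine Finset.sum_congr rfl fun b _ => ?_
    rw [Finset.mul_sum]
    refine Finset.sum_congr rfl fun c _ => ?_
    rw [Finset.mul_sum]
  rw [hstar, mul_comm]
  apply half_zero
  rw [← mul_add, ← hfact, hS]
end
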